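/- In the substitution game with pass budget N, the coach strategy that always selects a non-passing player with the largest number of remaining passes maintains the following invariant: in every reachable configuration ⟨M, f⟩ with k = |M|, if p₀, p₁, …, p_{k−1} enumerate M in ascending order of f, then f(p_i) ≤ N + 1 − k + i for all i. -/
import Mathlib


/-- One round of the substitution game with pass budget `N`, where the coach plays
greedily: if `P ≠ M` he chooses a non-passing player `p ∈ M \ P` with a largest
number of remaining passes, otherwise a fresh player `p = |M|`.
The new configuration is `M' = M ∪ {p}` with `f' p = N`, `f'` decremented on `P \ {p}`
and unchanged elsewhere. -/
def GreedyStep (N : ℕ) (M : Finset ℕ) (f : ℕ → ℕ) (M' : Finset ℕ) (f' : ℕ → ℕ) : Prop :=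
  ∃ P : Finset ℕ, P ⊆ M ∧ (∀ m ∈ P, 1 ≤ f m) ∧
    ∃ p : ℕ,
      ((P ≠ M ∧ p ∈ M \ P ∧ ∀ m ∈ M \ P, f m ≤ f p) ∨ (P = M ∧ p = M.card)) ∧
      M' = insert p M ∧
      f' p = N ∧
      (∀ m ∈ M, m ≠ p → f' m = if m ∈ P then f m - 1 else f m)

/-- Counting form of the invariant: for every threshold `v`, the number of players
with at least `v` remaining passes is at most `N + 1 - v`. -/
def GreedyInv (N : ℕ) (M : Finset ℕ) (f : ℕ → ℕ) : Prop :=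
  ∀ v : ℕ, (M.filter (fun m => v ≤ f m)).card ≤ N + 1 - v

lemma greedyInv_step {N : ℕ} {M M' : Finset ℕ} {f f' : ℕ → ℕ}
    (h : GreedyStep N M f M' f') (hinv : GreedyInv N M f) : GreedyInv N M' f' := by
  obtain ⟨P, hPM, hP1, p, hp, hM', hfp, hother⟩ := h
  have hfle : ∀ m ∈ M, f m ≤ N := by
    intro m hm
    by_contra hc
    push_neg at hc
    have h1 := hinv (N + 1)
    have hmem : m ∈ M.filter (fun m => N + 1 ≤ f m) := Finset.mem_filter.mpr ⟨hm, hc⟩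
    have h2 : 0 < (M.filter (fun m => N + 1 ≤ f m)).card :=
      Finset.card_pos.mpr ⟨m, hmem⟩
    omega
  intro v
  by_cases hN : v ≤ N
  · by_cases hex : ∃ m ∈ M, m ∉ P ∧ m ≠ p ∧ v ≤ f m
    · obtain ⟨m, hmM, hmP, hmp, hmv⟩ := hex
      rcases hp with ⟨hne, hpMP, hmax⟩ | ⟨hPeq, _⟩
      · have hpM : p ∈ M := (Finset.mem_sdiff.mp hpMP).1
        have hMeq : M' = M := by rw [hM']; exact Finset.insert_eq_self.mpr hpM
        have hsub : M'.filter (fun m => v ≤ f' m) ⊆ M.filter (fun m => v ≤ f m) := by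
          intro x hx
          rw [hMeq] at hx
          obtain ⟨hxM, hxv⟩ := Finset.mem_filter.mp hx
          refine Finset.mem_filter.mpr ⟨hxM, ?_⟩
          by_cases hxp : x = p
          · subst hxp
            have := hmax m (Finset.mem_sdiff.mpr ⟨hmM, hmP⟩)
            omega
          · have hfx := hother x hxM hxp
            by_cases hxP : x ∈ P <;> simp [hxP] at hfx <;> omega
        calc (M'.filter (fun m => v ≤ f' m)).card
            ≤ (M.filter (fun m => v ≤ f m)).card := Finset.card_le_card hsub
          _ ≤ N + 1 - v := hinv v
      · subst hPeq; exact absurd hmM hmP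
    · push_neg at hex
      have hsub : M'.filter (fun m => v ≤ f' m) ⊆
          insert p (M.filter (fun m => v + 1 ≤ f m)) := by
        intro x hx
        obtain ⟨hxM', hxv⟩ := Finset.mem_filter.mp hx
        by_cases hxp : x = p
        · subst hxp; exact Finset.mem_insert_self _ _
        · have hxM : x ∈ M := by
            rw [hM'] at hxM'
            rcases Finset.mem_insert.mp hxM' with h | h
            · exact absurd h hxp
            · exact h
          have hfx := hother x hxM hxp
          by_cases hxP : x ∈ P
          · simp [hxP] at hfx
            refine Finset.mem_insert_of_mem (Finset.mem_filter.mpr ⟨hxM, ?_⟩)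
            have := hP1 x hxP
            omega
          · simp [hxP] at hfx
            have := hex x hxM hxP hxp
            omega
      have h1 := hinv (v + 1)
      have h2 := Finset.card_le_card hsub
      have h3 := Finset.card_insert_le p (M.filter (fun m => v + 1 ≤ f m))
      omega
  · have hempty : M'.filter (fun m => v ≤ f' m) = ∅ := by
      rw [Finset.filter_eq_empty_iff]
      intro x hxM'
      by_cases hxp : x = p
      · subst hxp; rw [hfp]; omega
      · have hxM : x ∈ M := by
          rw [hM'] at hxM'
          rcases Finset.mem_insert.mp hxM' with h | h
          · exact absurd h hxp
          · exact h
        have hfx := hother x hxM hxp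
        have hb := hfle x hxM
        by_cases hxP : x ∈ P <;> simp [hxP] at hfx <;> omega
    simp [hempty]

/-- invariant of the greedy coach strategy. In every reachable
configuration `⟨M, f⟩` with `k = |M|`, if `e 0, e 1, …, e (k-1)` enumerates `M` in
ascending order of `f`, then `f (e i) ≤ N + 1 - k + i` for all `i`
(stated as `f (e i) + k ≤ N + 1 + i` to avoid truncated subtraction). -/
theorem greedy_invariant (N : ℕ) (M : ℕ → Finset ℕ) (f : ℕ → ℕ → ℕ)
    (h0 : M 0 = ∅)
    (hstep : ∀ t, GreedyStep N (M t) (f t) (M (t + 1)) (f (t + 1))) :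
    ∀ t, ∀ k, k = (M t).card →
      ∀ e : Fin k → ℕ, Function.Injective e → (∀ i, e i ∈ M t) →
        (∀ i j : Fin k, i ≤ j → f t (e i) ≤ f t (e j)) →
        ∀ i : Fin k, f t (e i) + k ≤ N + 1 + (i : ℕ) := by
  have hinv : ∀ t, GreedyInv N (M t) (f t) := by
    intro t
    induction t with
    | zero => intro v; simp [h0]
    | succ t ih => exact greedyInv_step (hstep t) ih
  intro t k hk e he heM hmono i
  set v := f t (e i) with hv
  have hcard : k - (i : ℕ) ≤ ((M t).filter (fun m => v ≤ f t m)).card := by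
    have hmaps : ∀ j : Fin (k - (i : ℕ)), j ∈ (Finset.univ : Finset (Fin (k - (i : ℕ)))) →
        e ⟨(i : ℕ) + (j : ℕ), by omega⟩ ∈ (M t).filter (fun m => v ≤ f t m) := by
      intro j _
      refine Finset.mem_filter.mpr ⟨heM _, ?_⟩
      exact hmono i ⟨(i : ℕ) + (j : ℕ), by omega⟩ (by simp [Fin.le_def])
    have hinj : Set.InjOn (fun j : Fin (k - (i : ℕ)) =>
        e ⟨(i : ℕ) + (j : ℕ), by omega⟩) (Finset.univ : Finset (Fin (k - (i : ℕ)))) := by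
      intro a _ b _ hab
      have := he hab
      have : (i : ℕ) + (a : ℕ) = (i : ℕ) + (b : ℕ) := congrArg Fin.val this
      exact Fin.ext (by omega)
    have := Finset.card_le_card_of_injOn _ hmaps hinj
    simpa using this
  have h1 := hinv t v
  have h2 : (i : ℕ) < k := i.isLt
  omega
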